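/- There exists a first-order sentence φ over the vocabulary consisting of one constant symbol a and one ternary relation symbol R with the following property: letting g(n) denote the number of interpretations of R on the universe [n] = {1,…,n} that satisfy φ when the constant a is interpreted as the fixed element n, one has g(n) = 0 for every n that is not a power of 2, and g(n) ≡ 1 (mod 2) whenever n = 2^m for some m ∈ ℕ. In particular, n ↦ g(n) mod 2 is not ultimately periodic, so g is not MC-finite. -/

import Mathlib

open FirstOrder Language

/-- A purely relational language with relation symbols `Rel k` of arity `k`. -/
def relLang (Rel : ℕ → Type) : Language :=
  ⟨fun _ => Empty, Rel⟩

/-- A language with constant symbols indexed by `Fin ℓ`, relation symbols `Rel k`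
of arity `k`, and no other non-logical symbols. -/
def cLang (ℓ : ℕ) (Rel : ℕ → Type) : Language :=
  ⟨fun k => match k with | 0 => Fin ℓ | _ + 1 => Empty, Rel⟩

/-- The `relLang Rel`-structure on `M` determined by an interpretation `S`
of the relation symbols. -/
def relLang.mkStructure {Rel : ℕ → Type} {M : Type}
    (S : ∀ k, Rel k → (Fin k → M) → Prop) : (relLang Rel).Structure M where
  funMap := fun f _ => f.elim
  RelMap := fun {k} r v => S k r v

/-- The `cLang ℓ Rel`-structure on `M` determined by an interpretation `c` of the
constant symbols and an interpretation `S` of the relation symbols. -/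
def cLang.mkStructure {ℓ : ℕ} {Rel : ℕ → Type} {M : Type}
    (c : Fin ℓ → M) (S : ∀ k, Rel k → (Fin k → M) → Prop) :
    (cLang ℓ Rel).Structure M where
  funMap := fun {k} f _ =>
    match k, f with
    | 0, i => c i
  RelMap := fun {k} r v => S k r v

/-- `Sp_φ(n)`: the number of interpretations of the relation symbols on `[n]`
satisfying the sentence `φ` of a relational language. -/
noncomputable def spCount {Rel : ℕ → Type} (φ : (relLang Rel).Sentence) (n : ℕ) : ℕ :=
  Nat.card { S : ∀ k, Rel k → (Fin k → Fin n) → Prop //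
    letI := relLang.mkStructure S
    Fin n ⊨ φ }

/-- `f_φ(n)`: the number of interpretations of the relation symbols on `[n + ℓ]`
satisfying `φ`, where the `i`-th (hard-wired) constant is interpreted as `n + i`. -/
noncomputable def fCount (ℓ : ℕ) {Rel : ℕ → Type} (φ : (cLang ℓ Rel).Sentence) (n : ℕ) : ℕ :=
  Nat.card { S : ∀ k, Rel k → (Fin k → Fin (n + ℓ)) → Prop //
    letI := cLang.mkStructure (fun i => Fin.natAdd n i) S
    Fin (n + ℓ) ⊨ φ }

/-- Relation symbols: `z` nullary, `u` unary, `b` binary, none of higher arity. -/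
def rels012 (z u b : ℕ) : ℕ → Type := fun k =>
  match k with
  | 0 => Fin z
  | 1 => Fin u
  | 2 => Fin b
  | _ => Empty

/-- A sequence is MC-finite iff for every m ≥ 2 it is ultimately periodic modulo m. -/
def MCFinite (s : ℕ → ℕ) : Prop :=
  ∀ m : ℕ, 2 ≤ m → ∃ r p : ℕ, 1 ≤ p ∧ ∀ n : ℕ, r ≤ n → s (n + p) ≡ s n [MOD m]

/-- The vocabulary with a single ternary relation symbol (and nothing else). -/
def rels3 : ℕ → Type := fun k =>
  match k with
  | 3 => Fin 1
  | _ => Empty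

/-- `g φ n`: the number of interpretations of the single ternary relation symbol on the
universe [n] = Fin n that satisfy φ when the constant symbol is interpreted as the fixed
element n (the last element of [n]).  (We count pairs of a relation interpretation and a
constant interpretation whose value is pinned to be n, which is the same count.) -/
noncomputable def gCount (φ : (cLang 1 rels3).Sentence) (n : ℕ) : ℕ :=
  Nat.card { p : (∀ k, rels3 k → (Fin k → Fin n) → Prop) × (Fin 1 → Fin n) //
    ((p.2 0 : ℕ) + 1 = n) ∧
    (letI := cLang.mkStructure p.2 p.1
     Fin n ⊨ φ) }

/-!
For `x ≠ a` read `R(x, ·, ·)` as an equivalence relation on `[n]`, the *level* named by `x`.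
The sentence says that the levels form a chain from the discrete relation to a relation with
two classes, that between consecutive levels every class splits into exactly two, and that
`R(y, a, x)` holds exactly when the level of `x` is strictly finer than that of `y`. The last
axiom determines which element names which level, so a model is nothing but a chain of
partitions of `[n]` halving at every step.

The finest non-discrete level of a model is a perfect matching `s` of `[n]`, and the model
descends to a model on the set `[n]/s` of pairs, with constant the pair of `a`; conversely every
model on `[n]/s` lifts to exactly one model with matching `s`. Hence `n` is a power of two, and
`g(2k)` is a sum of `(2k - 1)!!` copies of `g(k)`, one for each perfect matching of `[2k]`. An odd
number of odd terms is odd, so `g(2^m)` is odd by induction on `m`.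
-/

open Function

theorem Nat.odd_card_sigma {ι : Type} {β : ι → Type} [Finite ι] [∀ i, Finite (β i)]
    (hι : Odd (Nat.card ι)) (hβ : ∀ i, Odd (Nat.card (β i))) : Odd (Nat.card (Σ i, β i)) := by
  have := Fintype.ofFinite ι
  rw [Nat.card_sigma, Finset.odd_sum_iff_odd_card_odd,
    Finset.filter_true_of_mem fun i _ => hβ i, Finset.card_univ, ← Nat.card_eq_fintype_card]
  exact hι

theorem Nat.not_exists_eq_two_pow_of_lt_of_lt {m n : ℕ} (h₁ : 2 ^ m < n) (h₂ : n < 2 ^ (m + 1)) :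
    ¬ ∃ k, n = 2 ^ k := by
  rintro ⟨k, rfl⟩
  have := (Nat.pow_lt_pow_iff_right (by norm_num)).1 h₁
  have := (Nat.pow_lt_pow_iff_right (by norm_num)).1 h₂
  omega

section Complement

variable {X : Type} [Finite X]

lemma card_subtype_ne_add_one (x₀ : X) : Nat.card {y // y ≠ x₀} + 1 = Nat.card X := by
  rw [← Set.ncard_add_ncard_compl {x₀}, Set.ncard_singleton, add_comm, ← Nat.card_coe_set_eq]
  rfl

lemma card_subtype_ne_and_ne_add_two {x₀ y : X} (hy : y ≠ x₀) :
    Nat.card {z // z ≠ x₀ ∧ z ≠ y} + 2 = Nat.card X := by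
  rw [← Set.ncard_add_ncard_compl {x₀, y}, Set.ncard_pair hy.symm, add_comm,
    ← Nat.card_coe_set_eq]
  exact congrArg _ (Nat.card_congr (Equiv.subtypeEquivRight fun z => by simp))

end Complement

section Relations

variable {α β : Type} {f : α → β} {r r' : β → β → Prop}

lemma Function.Surjective.equivalence_of_onFun (hf : Surjective f) (h : Equivalence (r on f)) :
    Equivalence r where
  refl := hf.forall.2 h.refl
  symm {υ ζ} := by
    obtain ⟨u, rfl⟩ := hf υ
    obtain ⟨v, rfl⟩ := hf ζ
    exact h.symm
  trans {υ ζ κ} := by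
    obtain ⟨u, rfl⟩ := hf υ
    obtain ⟨v, rfl⟩ := hf ζ
    obtain ⟨w, rfl⟩ := hf κ
    exact h.trans

lemma Function.Surjective.onFun_le_onFun_iff (hf : Surjective f) :
    (r on f) ≤ (r' on f) ↔ r ≤ r' := by
  simp only [Pi.le_def, le_Prop_eq, hf.forall, onFun]

lemma Function.Surjective.onFun_lt_onFun_iff (hf : Surjective f) :
    (r on f) < (r' on f) ↔ r < r' := by
  simp only [lt_iff_le_not_ge, hf.onFun_le_onFun_iff]

end Relations

@[ext]
structure Pairing (X : Type) where
  toFun : X → X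
  involutive : Involutive toFun
  ne_self : ∀ x, toFun x ≠ x

namespace Pairing

variable {X : Type}

instance : CoeFun (Pairing X) (fun _ => X → X) := ⟨toFun⟩

instance [Finite X] : Finite (Pairing X) :=
  Finite.of_injective toFun fun _ _ => Pairing.ext

@[simp] lemma apply_apply (s : Pairing X) (x : X) : s (s x) = x := s.involutive x

def setoid (s : Pairing X) : Setoid X where
  r u v := u = v ∨ s u = v
  iseqv := by
    refine ⟨fun _ => .inl rfl, ?_, ?_⟩
    · rintro u _ (rfl | rfl) <;> simp
    · rintro u _ _ (rfl | rfl) (rfl | rfl) <;> simp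

lemma mk_eq_mk {s : Pairing X} {u v : X} :
    (⟦u⟧ : Quotient s.setoid) = ⟦v⟧ ↔ u = v ∨ s u = v := Quotient.eq

lemma mk_apply (s : Pairing X) (u : X) : (⟦s u⟧ : Quotient s.setoid) = ⟦u⟧ :=
  mk_eq_mk.2 (.inr (s.apply_apply u))

lemma card_fiber_mk (s : Pairing X) (ξ : Quotient s.setoid) : Nat.card {v // ⟦v⟧ = ξ} = 2 := by
  induction ξ using Quotient.inductionOn with | h u => ?_
  rw [Nat.card_eq_two_iff' ⟨u, rfl⟩]
  refine ⟨⟨s u, s.mk_apply u⟩, fun h => s.ne_self u (congrArg Subtype.val h), ?_⟩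
  rintro ⟨v, hv⟩ hne
  rcases mk_eq_mk.1 hv with rfl | rfl
  · exact absurd rfl hne
  · simp

theorem card_eq_two_mul [Finite X] (s : Pairing X) :
    Nat.card X = 2 * Nat.card (Quotient s.setoid) := by
  have := Fintype.ofFinite (Quotient s.setoid)
  rw [← Nat.card_congr (Equiv.sigmaFiberEquiv (Quotient.mk s.setoid)), Nat.card_sigma,
    Finset.sum_congr rfl fun ξ _ => s.card_fiber_mk ξ, Finset.sum_const, Finset.card_univ,
    ← Nat.card_eq_fintype_card, smul_eq_mul, mul_comm]

section Restrict

variable {x₀ y : X}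

def restrict (s : Pairing X) (hs : s x₀ = y) : Pairing {z : X // z ≠ x₀ ∧ z ≠ y} where
  toFun z := ⟨s z, fun h => z.2.2 ((s.apply_apply z).symm.trans (by rw [h, hs])),
    fun h => z.2.1 (s.involutive.injective (h.trans hs.symm))⟩
  involutive z := Subtype.ext (s.apply_apply z)
  ne_self z h := s.ne_self z (congrArg Subtype.val h)

section Extend

variable (t : Pairing {z : X // z ≠ x₀ ∧ z ≠ y})

open Classical in
noncomputable def extend (z : X) : X :=
  if h : z ≠ x₀ ∧ z ≠ y then t ⟨z, h⟩ else if z = x₀ then y else x₀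

lemma extend_of_ne {z : X} (h : z ≠ x₀ ∧ z ≠ y) : extend t z = t ⟨z, h⟩ := dif_pos h

lemma extend_left : extend t x₀ = y := by
  simp [extend]

lemma extend_right (hy : y ≠ x₀) : extend t y = x₀ := by
  simp [extend, hy]

lemma extend_involutive (hy : y ≠ x₀) : Involutive (extend t) := by
  intro z
  by_cases h : z ≠ x₀ ∧ z ≠ y
  · rw [extend_of_ne t h, extend_of_ne t (t ⟨z, h⟩).2]
    simp
  · grind [extend]

noncomputable def ofRestrict (hy : y ≠ x₀) : Pairing X where
  toFun := extend t
  involutive := extend_involutive t hy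
  ne_self z := by
    by_cases h : z ≠ x₀ ∧ z ≠ y
    · rw [extend_of_ne t h]
      exact fun h' => t.ne_self _ (Subtype.ext h')
    · grind [extend]

end Extend

noncomputable def restrictEquiv (hy : y ≠ x₀) :
    {s : Pairing X // s x₀ = y} ≃ Pairing {z : X // z ≠ x₀ ∧ z ≠ y} where
  toFun s := s.1.restrict s.2
  invFun t := ⟨ofRestrict t hy, extend_left t⟩
  left_inv s := by
    obtain ⟨s, rfl⟩ := s
    ext z
    by_cases h : z ≠ x₀ ∧ z ≠ s x₀
    · exact extend_of_ne _ h
    · obtain rfl | rfl : z = x₀ ∨ z = s x₀ := by tauto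
      · exact extend_left _
      · exact (extend_right _ hy).trans (s.apply_apply x₀).symm
  right_inv t := by
    ext z
    exact extend_of_ne t z.2

end Restrict

noncomputable def equivSigmaRestrict (x₀ : X) :
    Pairing X ≃ Σ y : {y // y ≠ x₀}, Pairing {z : X // z ≠ x₀ ∧ z ≠ y} :=
  (Equiv.sigmaFiberEquiv fun s : Pairing X => (⟨s x₀, s.ne_self x₀⟩ : {y // y ≠ x₀})).symm.trans
    (Equiv.sigmaCongrRight fun y =>
      (Equiv.subtypeEquivRight fun _ => Subtype.ext_iff).trans (restrictEquiv y.2))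

theorem odd_card [Finite X] (h : Even (Nat.card X)) : Odd (Nat.card (Pairing X)) := by
  obtain ⟨k, hk⟩ := h
  induction k generalizing X with
  | zero =>
    have : IsEmpty X := (Nat.card_eq_zero.1 hk).resolve_right (not_infinite_iff_finite.2 ‹_›)
    have : Unique (Pairing X) := ⟨⟨⟨isEmptyElim, isEmptyElim, isEmptyElim⟩⟩,
      fun _ => Pairing.ext (funext isEmptyElim)⟩
    rw [Nat.card_unique]
    exact odd_one
  | succ k ih =>
    obtain ⟨x₀⟩ : Nonempty X := (Nat.card_pos_iff.1 (by omega)).1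
    rw [Nat.card_congr (equivSigmaRestrict x₀)]
    refine Nat.odd_card_sigma ⟨k, by have := card_subtype_ne_add_one x₀; omega⟩ fun y => ih ?_
    have := card_subtype_ne_and_ne_add_two y.2
    omega

end Pairing

section Hierarchy

variable {X : Type} {a : X} {T : X → X → X → Prop} {x y : X}

def HasTwoClasses (r : X → X → Prop) : Prop := ∃ u v, ¬ r u v ∧ ∀ t, r t u ∨ r t v

def IsCoveringLevel (a : X) (T : X → X → X → Prop) (x' x : X) : Prop :=
  T x' < T x ∧ ∀ y ≠ a, T x' < T y → ¬ T y < T x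

structure IsDyadicHierarchy (a : X) (T : X → X → X → Prop) : Prop where
  not_rel_base : ∀ u v, ¬ T a u v
  equivalence : ∀ x ≠ a, Equivalence (T x)
  total : ∀ x ≠ a, ∀ y ≠ a, T x ≤ T y ∨ T y ≤ T x
  separating : ∀ u v, u ≠ v → ∃ x ≠ a, ¬ T x u v
  exists_top : ∀ y ≠ a, ∃ x ≠ a, (∀ z ≠ a, T z ≤ T x) ∧ HasTwoClasses (T x)
  split : ∀ x ≠ a, ∀ x' ≠ a, IsCoveringLevel a T x' x → ∀ u, ∃ v w,
    T x u v ∧ T x u w ∧ ¬ T x' v w ∧ ∀ t, T x u t → T x' t v ∨ T x' t w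
  rel_base_iff : ∀ x ≠ a, ∀ y ≠ a, T y a x ↔ T x < T y

def IsNondiscrete (T : X → X → X → Prop) (x : X) : Prop := ∃ u v, u ≠ v ∧ T x u v

def Paired (T : X → X → X → Prop) (u v : X) : Prop := ∀ x, IsNondiscrete T x → T x u v

lemma IsNondiscrete.of_le (hx : IsNondiscrete T x) (h : T x ≤ T y) : IsNondiscrete T y :=
  let ⟨u, v, huv, hT⟩ := hx
  ⟨u, v, huv, h u v hT⟩

lemma IsNondiscrete.not_le (hx : IsNondiscrete T x) (hy : ¬ IsNondiscrete T y) : ¬ T x ≤ T y :=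
  fun h => hy (hx.of_le h)

lemma IsNondiscrete.not_le_eq (hx : IsNondiscrete T x) : ¬ T x ≤ Eq :=
  fun h => let ⟨u, v, huv, hT⟩ := hx; huv (h u v hT)

namespace IsDyadicHierarchy

variable (hT : IsDyadicHierarchy a T)
include hT

lemma refl (hx : x ≠ a) (u : X) : T x u u := (hT.equivalence x hx).refl u

lemma symm (hx : x ≠ a) {u v : X} (h : T x u v) : T x v u := (hT.equivalence x hx).symm h

lemma trans (hx : x ≠ a) {u v w : X} (h : T x u v) (h' : T x v w) : T x u w :=
  (hT.equivalence x hx).trans h h'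

lemma ne_base (hx : IsNondiscrete T x) : x ≠ a := by
  rintro rfl
  obtain ⟨u, v, -, h⟩ := hx
  exact hT.not_rel_base u v h

lemma rel_iff_eq (hx : x ≠ a) (hd : ¬ IsNondiscrete T x) {u v : X} : T x u v ↔ u = v :=
  ⟨fun h => by_contra fun huv => hd ⟨u, v, huv, h⟩, fun h => h ▸ hT.refl hx u⟩

lemma le_of_not_isNondiscrete (hd : ¬ IsNondiscrete T x) (hy : y ≠ a) : T x ≤ T y := by
  intro u v h
  by_cases huv : u = v
  · exact huv ▸ hT.refl hy u
  · exact absurd ⟨u, v, huv, h⟩ hd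

lemma lt_of_isNondiscrete (hd : ¬ IsNondiscrete T x) (hy : IsNondiscrete T y) : T x < T y :=
  lt_of_le_not_ge (hT.le_of_not_isNondiscrete hd (hT.ne_base hy)) (hy.not_le hd)

lemma paired_equivalence : Equivalence (Paired T) where
  refl u _ hx := hT.refl (hT.ne_base hx) u
  symm h x hx := hT.symm (hT.ne_base hx) (h x hx)
  trans h h' x hx := hT.trans (hT.ne_base hx) (h x hx) (h' x hx)

lemma exists_least [Finite X] (P : X → Prop) (hP : ∃ x, P x) (ha : ∀ x, P x → x ≠ a) :
    ∃ x, P x ∧ ∀ y, P y → T x ≤ T y := by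
  obtain ⟨x, hx, hmin⟩ := (Set.toFinite {x | P x}).exists_minimalFor T _ hP
  refine ⟨x, hx, fun y hy => ?_⟩
  rcases hT.total x (ha x hx) y (ha y hy) with h | h
  exacts [h, hmin hy h]

lemma exists_discrete [Finite X] (h : ∃ b, b ≠ a) : ∃ x ≠ a, ¬ IsNondiscrete T x := by
  obtain ⟨x, hx, hleast⟩ := hT.exists_least (· ≠ a) h fun _ => id
  refine ⟨x, hx, fun ⟨u, v, huv, hxuv⟩ => ?_⟩
  obtain ⟨y, hy, hyuv⟩ := hT.separating u v huv
  exact hyuv (hleast y hy u v hxuv)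

lemma paired_base_iff : Paired T a x ↔ ¬ IsNondiscrete T x := by
  refine ⟨fun h hx => ?_, fun hd z hz => ?_⟩
  · exact lt_irrefl (T x) ((hT.rel_base_iff x (hT.ne_base hx) x (hT.ne_base hx)).1 (h x hx))
  · by_cases hx : x = a
    · exact hx ▸ hT.refl (hT.ne_base hz) a
    · exact (hT.rel_base_iff x hx z (hT.ne_base hz)).2 (hT.lt_of_isNondiscrete hd hz)

lemma not_lt_of_paired (hx : IsNondiscrete T x) (hy : IsNondiscrete T y) (h : Paired T x y) :
    ¬ T x < T y := fun hlt =>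
  have hya := hT.ne_base hy
  lt_irrefl (T y) <| (hT.rel_base_iff y hya y hya).1 <|
    hT.trans hya ((hT.rel_base_iff x (hT.ne_base hx) y hya).2 hlt) (h y hy)

lemma eq_of_paired (hx : IsNondiscrete T x) (hy : IsNondiscrete T y) (h : Paired T x y) :
    T x = T y := by
  rcases hT.total x (hT.ne_base hx) y (hT.ne_base hy) with hle | hle
  · exact hle.eq_of_not_lt (hT.not_lt_of_paired hx hy h)
  · exact (hle.eq_of_not_lt (hT.not_lt_of_paired hy hx (hT.paired_equivalence.symm h))).symm

lemma isCoveringLevel_of_least {m d : X} (hm : IsNondiscrete T m)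
    (hleast : ∀ y, IsNondiscrete T y → T m ≤ T y) (hda : d ≠ a) (hd : ¬ IsNondiscrete T d) :
    IsCoveringLevel a T d m := by
  refine ⟨hT.lt_of_isNondiscrete hd hm, fun y _ hdy hym => ?_⟩
  by_cases hy : IsNondiscrete T y
  · exact hym.not_ge (hleast y hy)
  · exact hdy.not_ge (hT.le_of_not_isNondiscrete hy hda)

lemma exists_pair_of_least [Finite X] {m : X} (hm : IsNondiscrete T m)
    (hleast : ∀ y, IsNondiscrete T y → T m ≤ T y) (u : X) :
    ∃ v, v ≠ u ∧ ∀ w, T m u w ↔ w = u ∨ w = v := by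
  have hma := hT.ne_base hm
  obtain ⟨d, hda, hd⟩ := hT.exists_discrete ⟨m, hma⟩
  obtain ⟨v, w, huv, huw, hvw, hcover⟩ :=
    hT.split m hma d hda (hT.isCoveringLevel_of_least hm hleast hda hd) u
  simp only [hT.rel_iff_eq hda hd] at hvw hcover
  rcases hcover u (hT.refl hma u) with rfl | rfl
  · exact ⟨w, Ne.symm hvw, fun t => ⟨hcover t, by rintro (rfl | rfl) <;> assumption⟩⟩
  · exact ⟨v, hvw, fun t =>
      ⟨fun ht => (hcover t ht).symm, by rintro (rfl | rfl) <;> assumption⟩⟩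

lemma exists_pair_of_forall_not_isNondiscrete {b : X} (hb : b ≠ a)
    (hd : ∀ x, ¬ IsNondiscrete T x) (u : X) : ∃ v, v ≠ u ∧ ∀ w, w = u ∨ w = v := by
  obtain ⟨x, hxa, -, p, q, hpq, hcover⟩ := hT.exists_top b hb
  simp only [hT.rel_iff_eq hxa (hd x)] at hpq hcover
  rcases hcover u with rfl | rfl
  · exact ⟨q, Ne.symm hpq, hcover⟩
  · exact ⟨p, hpq, fun t => (hcover t).symm⟩

lemma exists_pair [Finite X] (h : ∃ b, b ≠ a) (u : X) :
    ∃ v, v ≠ u ∧ ∀ w, Paired T u w ↔ w = u ∨ w = v := by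
  by_cases hnd : ∃ x, IsNondiscrete T x
  · obtain ⟨m, hm, hleast⟩ := hT.exists_least _ hnd fun _ => hT.ne_base
    obtain ⟨v, hvu, hv⟩ := hT.exists_pair_of_least hm hleast u
    exact ⟨v, hvu, fun w => ⟨fun hw => (hv w).1 (hw m hm),
      fun hw x hx => hleast x hx u w ((hv w).2 hw)⟩⟩
  · push Not at hnd
    obtain ⟨b, hb⟩ := h
    obtain ⟨v, hvu, hv⟩ := hT.exists_pair_of_forall_not_isNondiscrete hb hnd u
    exact ⟨v, hvu, fun w => ⟨fun _ => hv w, fun _ x hx => absurd hx (hnd x)⟩⟩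

end IsDyadicHierarchy

end Hierarchy

section Quotient

variable {X : Type} {a : X} {T : X → X → X → Prop} {s : Pairing X} {x y : X}

def IsPairingOf (s : Pairing X) (T : X → X → X → Prop) : Prop :=
  ∀ u v, Paired T u v ↔ u = v ∨ s u = v

lemma IsPairingOf.unique {s' : Pairing X} (hs : IsPairingOf s T) (hs' : IsPairingOf s' T) :
    s = s' := by
  ext u
  rcases (hs' u (s u)).1 ((hs u (s u)).2 (.inr rfl)) with h | h
  exacts [absurd h.symm (s.ne_self u), h.symm]

lemma IsPairingOf.mk_eq_mk_iff (hs : IsPairingOf s T) {u v : X} :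
    (⟦u⟧ : Quotient s.setoid) = ⟦v⟧ ↔ Paired T u v :=
  Pairing.mk_eq_mk.trans (hs u v).symm

def quotRel (s : Pairing X) (a : X) (T : X → X → X → Prop) :
    Quotient s.setoid → Quotient s.setoid → Quotient s.setoid → Prop :=
  fun ξ υ ζ => ξ ≠ ⟦a⟧ ∧ ∃ x u v, ⟦x⟧ = ξ ∧ ⟦u⟧ = υ ∧ ⟦v⟧ = ζ ∧ T x u v

namespace IsDyadicHierarchy

variable (hT : IsDyadicHierarchy a T)
include hT

lemma exists_isPairingOf [Finite X] (h : ∃ b, b ≠ a) : ∃ s : Pairing X, IsPairingOf s T := by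
  choose p hpu hp using hT.exists_pair h
  refine ⟨⟨p, fun u => ?_, hpu⟩, fun u v => (hp u v).trans (or_congr eq_comm eq_comm)⟩
  rcases (hp (p u) u).1 (hT.paired_equivalence.symm ((hp u (p u)).2 (.inr rfl))) with h | h
  exacts [absurd h.symm (hpu u), h.symm]

variable (hs : IsPairingOf s T)
include hs

lemma mk_ne_mk_base_iff : (⟦x⟧ : Quotient s.setoid) ≠ ⟦a⟧ ↔ IsNondiscrete T x := by
  rw [Ne, hs.mk_eq_mk_iff, ← not_iff_not, not_not, ← hT.paired_base_iff]
  exact ⟨hT.paired_equivalence.symm, hT.paired_equivalence.symm⟩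

lemma forall_mk_ne_base {P : Quotient s.setoid → Prop} :
    (∀ ξ ≠ ⟦a⟧, P ξ) ↔ ∀ x, IsNondiscrete T x → P ⟦x⟧ := by
  simp only [Quotient.mk_surjective.forall, Ne, ← hT.mk_ne_mk_base_iff hs]

lemma quotRel_onFun (hx : IsNondiscrete T x) : (quotRel s a T ⟦x⟧ on Quotient.mk _) = T x := by
  ext u v
  refine ⟨fun ⟨_, x', u', v', hx', hu', hv', h⟩ => ?_,
    fun h => ⟨(hT.mk_ne_mk_base_iff hs).2 hx, x, u, v, rfl, rfl, rfl, h⟩⟩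
  have hx'nd := (hT.mk_ne_mk_base_iff hs).1 (hx' ▸ (hT.mk_ne_mk_base_iff hs).2 hx)
  rw [hT.eq_of_paired hx'nd hx (hs.mk_eq_mk_iff.1 hx')] at h
  have hxa := hT.ne_base hx
  exact hT.trans hxa (hT.trans hxa (hT.symm hxa (hs.mk_eq_mk_iff.1 hu' x hx)) h)
    (hs.mk_eq_mk_iff.1 hv' x hx)

lemma quotRel_mk (hx : IsNondiscrete T x) {u v : X} :
    quotRel s a T ⟦x⟧ ⟦u⟧ ⟦v⟧ ↔ T x u v := by
  rw [← hT.quotRel_onFun hs hx]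

lemma quotRel_mk_le_iff (hx : IsNondiscrete T x) (hy : IsNondiscrete T y) :
    quotRel s a T ⟦x⟧ ≤ quotRel s a T ⟦y⟧ ↔ T x ≤ T y := by
  rw [← Quotient.mk_surjective.onFun_le_onFun_iff, hT.quotRel_onFun hs hx,
    hT.quotRel_onFun hs hy]

lemma quotRel_mk_lt_iff (hx : IsNondiscrete T x) (hy : IsNondiscrete T y) :
    quotRel s a T ⟦x⟧ < quotRel s a T ⟦y⟧ ↔ T x < T y := by
  rw [← Quotient.mk_surjective.onFun_lt_onFun_iff, hT.quotRel_onFun hs hx,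
    hT.quotRel_onFun hs hy]

lemma isCoveringLevel_of_quotRel {x' : X} (hx : IsNondiscrete T x) (hx' : IsNondiscrete T x')
    (h : IsCoveringLevel ⟦a⟧ (quotRel s a T) ⟦x'⟧ ⟦x⟧) : IsCoveringLevel a T x' x := by
  refine ⟨(hT.quotRel_mk_lt_iff hs hx' hx).1 h.1, fun y _ hx'y hyx => ?_⟩
  have hy := hx'.of_le hx'y.le
  exact h.2 _ ((hT.mk_ne_mk_base_iff hs).2 hy) ((hT.quotRel_mk_lt_iff hs hx' hy).2 hx'y)
    ((hT.quotRel_mk_lt_iff hs hy hx).2 hyx)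

theorem isDyadicHierarchy_quotRel : IsDyadicHierarchy ⟦a⟧ (quotRel s a T) where
  not_rel_base _ _ h := h.1 rfl
  equivalence := (hT.forall_mk_ne_base hs).2 fun x hx =>
    Quotient.mk_surjective.equivalence_of_onFun <| by
      rw [hT.quotRel_onFun hs hx]
      exact hT.equivalence x (hT.ne_base hx)
  total := (hT.forall_mk_ne_base hs).2 fun x hx => (hT.forall_mk_ne_base hs).2 fun y hy => by
    rw [hT.quotRel_mk_le_iff hs hx hy, hT.quotRel_mk_le_iff hs hy hx]
    exact hT.total x (hT.ne_base hx) y (hT.ne_base hy)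
  separating := Quotient.mk_surjective.forall₂.2 fun u v huv => by
    obtain ⟨x, hx, hxuv⟩ : ∃ x, IsNondiscrete T x ∧ ¬ T x u v := by
      simpa [Paired] using mt hs.mk_eq_mk_iff.2 huv
    exact ⟨⟦x⟧, (hT.mk_ne_mk_base_iff hs).2 hx, (hT.quotRel_mk hs hx).not.2 hxuv⟩
  exists_top := (hT.forall_mk_ne_base hs).2 fun c hc => by
    obtain ⟨x, -, hcoarse, p, q, hpq, hcover⟩ := hT.exists_top c (hT.ne_base hc)
    have hx := hc.of_le (hcoarse c (hT.ne_base hc))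
    refine ⟨⟦x⟧, (hT.mk_ne_mk_base_iff hs).2 hx, (hT.forall_mk_ne_base hs).2 fun z hz =>
      (hT.quotRel_mk_le_iff hs hz hx).2 (hcoarse z (hT.ne_base hz)), ⟦p⟧, ⟦q⟧,
      (hT.quotRel_mk hs hx).not.2 hpq, Quotient.mk_surjective.forall.2 fun t => ?_⟩
    simpa only [hT.quotRel_mk hs hx] using hcover t
  split := (hT.forall_mk_ne_base hs).2 fun x hx => (hT.forall_mk_ne_base hs).2 fun x' hx' h => by
    refine Quotient.mk_surjective.forall.2 fun u => ?_
    obtain ⟨v, w, huv, huw, hvw, hcover⟩ := hT.split x (hT.ne_base hx) x' (hT.ne_base hx')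
      (hT.isCoveringLevel_of_quotRel hs hx hx' h) u
    refine ⟨⟦v⟧, ⟦w⟧, ?_⟩
    simp only [hT.quotRel_mk hs hx, hT.quotRel_mk hs hx', Quotient.mk_surjective.forall]
    exact ⟨huv, huw, hvw, hcover⟩
  rel_base_iff := (hT.forall_mk_ne_base hs).2 fun x hx => (hT.forall_mk_ne_base hs).2 fun y hy => by
    rw [hT.quotRel_mk hs hy, hT.quotRel_mk_lt_iff hs hx hy]
    exact hT.rel_base_iff x (hT.ne_base hx) y (hT.ne_base hy)

end IsDyadicHierarchy

end Quotient

section Lift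

variable {X : Type} {a : X} {s : Pairing X} {x y : X}
  {T' : Quotient s.setoid → Quotient s.setoid → Quotient s.setoid → Prop}

/-- On `x ≠ a` with `⟦x⟧ = ⟦a⟧` this is equality, since `T' ⟦a⟧` is empty in a hierarchy;
elsewhere the disjunct `u = v` is absorbed by reflexivity of `T' ⟦x⟧`. -/
def liftRel (s : Pairing X) (a : X)
    (T' : Quotient s.setoid → Quotient s.setoid → Quotient s.setoid → Prop) : X → X → X → Prop :=
  fun x u v => x ≠ a ∧ (u = v ∨ T' ⟦x⟧ ⟦u⟧ ⟦v⟧)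

lemma eq_le_liftRel (hx : x ≠ a) : Eq ≤ liftRel s a T' x := by
  rintro u _ rfl
  exact ⟨hx, .inl rfl⟩

namespace IsDyadicHierarchy

variable (hT' : IsDyadicHierarchy ⟦a⟧ T')
include hT'

lemma liftRel_of_mk_eq (hx : x ≠ a) (h : (⟦x⟧ : Quotient s.setoid) = ⟦a⟧) :
    liftRel s a T' x = Eq := by
  ext u v
  simp [liftRel, hx, h, hT'.not_rel_base]

lemma liftRel_of_mk_ne (h : (⟦x⟧ : Quotient s.setoid) ≠ ⟦a⟧) :
    liftRel s a T' x = (T' ⟦x⟧ on Quotient.mk _) := by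
  ext u v
  refine ⟨?_, fun huv => ⟨fun hx => h (hx ▸ rfl), .inr huv⟩⟩
  rintro ⟨-, rfl | huv⟩
  exacts [hT'.refl h _, huv]

lemma isNondiscrete_liftRel_iff :
    IsNondiscrete (liftRel s a T') x ↔ (⟦x⟧ : Quotient s.setoid) ≠ ⟦a⟧ := by
  refine ⟨fun hx h => ?_, fun h => ⟨a, s a, (s.ne_self a).symm, ?_⟩⟩
  · obtain ⟨u, v, huv, hxuv⟩ := hx
    rw [hT'.liftRel_of_mk_eq hxuv.1 h] at hxuv
    exact huv hxuv
  · rw [hT'.liftRel_of_mk_ne h, onFun, s.mk_apply]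
    exact hT'.refl h _

lemma liftRel_le_iff (hx : (⟦x⟧ : Quotient s.setoid) ≠ ⟦a⟧)
    (hy : (⟦y⟧ : Quotient s.setoid) ≠ ⟦a⟧) :
    liftRel s a T' x ≤ liftRel s a T' y ↔ T' ⟦x⟧ ≤ T' ⟦y⟧ := by
  rw [hT'.liftRel_of_mk_ne hx, hT'.liftRel_of_mk_ne hy, Quotient.mk_surjective.onFun_le_onFun_iff]

lemma liftRel_lt_iff (hx : (⟦x⟧ : Quotient s.setoid) ≠ ⟦a⟧)
    (hy : (⟦y⟧ : Quotient s.setoid) ≠ ⟦a⟧) :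
    liftRel s a T' x < liftRel s a T' y ↔ T' ⟦x⟧ < T' ⟦y⟧ := by
  rw [hT'.liftRel_of_mk_ne hx, hT'.liftRel_of_mk_ne hy, Quotient.mk_surjective.onFun_lt_onFun_iff]

lemma eq_lt_liftRel (hy : (⟦y⟧ : Quotient s.setoid) ≠ ⟦a⟧) : Eq < liftRel s a T' y :=
  lt_of_le_not_ge (eq_le_liftRel fun h => hy (h ▸ rfl))
    (hT'.isNondiscrete_liftRel_iff.2 hy).not_le_eq

lemma isCoveringLevel_of_liftRel {x' : X} (hx : (⟦x⟧ : Quotient s.setoid) ≠ ⟦a⟧)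
    (hx' : (⟦x'⟧ : Quotient s.setoid) ≠ ⟦a⟧) (h : IsCoveringLevel a (liftRel s a T') x' x) :
    IsCoveringLevel ⟦a⟧ T' ⟦x'⟧ ⟦x⟧ := by
  refine ⟨(hT'.liftRel_lt_iff hx' hx).1 h.1, fun η hη hx'η hηx => ?_⟩
  obtain ⟨y, rfl⟩ := Quotient.mk_surjective η
  exact h.2 y (fun h => hη (h ▸ rfl)) ((hT'.liftRel_lt_iff hx' hη).2 hx'η)
    ((hT'.liftRel_lt_iff hη hx).2 hηx)

/-- The lift of `x'` is equality, so the cover forces `T' ⟦x⟧` to be discrete (otherwise the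
discrete level of the quotient would lie strictly in between), and the classes of the lift of
`x` are the pairs `{u, s u}`. -/
lemma liftRel_split_of_mk_eq [Finite X] {x' : X} (hx : (⟦x⟧ : Quotient s.setoid) ≠ ⟦a⟧)
    (hx'a : x' ≠ a) (hx' : (⟦x'⟧ : Quotient s.setoid) = ⟦a⟧)
    (hcov : IsCoveringLevel a (liftRel s a T') x' x) (u : X) :
    ∃ v w, liftRel s a T' x u v ∧ liftRel s a T' x u w ∧ ¬ liftRel s a T' x' v w ∧
      ∀ t, liftRel s a T' x u t → liftRel s a T' x' t v ∨ liftRel s a T' x' t w := by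
  have hdisc : ¬ IsNondiscrete T' ⟦x⟧ := by
    intro hnd
    obtain ⟨η, hηa, hη⟩ := hT'.exists_discrete ⟨_, hx⟩
    obtain ⟨y, rfl⟩ := Quotient.mk_surjective η
    refine hcov.2 y (fun h => hηa (h ▸ rfl)) ?_ ?_
    · rw [hT'.liftRel_of_mk_eq hx'a hx']
      exact hT'.eq_lt_liftRel hηa
    · rw [hT'.liftRel_lt_iff hηa hx]
      exact hT'.lt_of_isNondiscrete hη hnd
  rw [hT'.liftRel_of_mk_eq hx'a hx', hT'.liftRel_of_mk_ne hx]
  refine ⟨u, s u, hT'.refl hx _, ?_, (s.ne_self u).symm, fun t ht => ?_⟩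
  · rw [onFun, s.mk_apply]
    exact hT'.refl hx _
  · rw [onFun, hT'.rel_iff_eq hx hdisc, Pairing.mk_eq_mk] at ht
    exact ht.imp Eq.symm Eq.symm

lemma liftRel_exists_top : ∀ y ≠ a, ∃ x ≠ a,
    (∀ z ≠ a, liftRel s a T' z ≤ liftRel s a T' x) ∧ HasTwoClasses (liftRel s a T' x) := by
  intro _ _
  by_cases hall : ∀ z, (⟦z⟧ : Quotient s.setoid) = ⟦a⟧
  · refine ⟨s a, s.ne_self a, ?_⟩
    rw [hT'.liftRel_of_mk_eq (s.ne_self a) (s.mk_apply a)]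
    refine ⟨fun z hz => ?_, a, s a, (s.ne_self a).symm, fun t => ?_⟩
    · rw [hT'.liftRel_of_mk_eq hz (hall z)]
    · rcases Pairing.mk_eq_mk.1 (hall t) with h | h
      exacts [.inl h, .inr (h ▸ (s.apply_apply t).symm)]
  push Not at hall
  obtain ⟨c, hc⟩ := hall
  obtain ⟨ξ, hξ, hcoarse, υ, ζ, hυζ, hcover⟩ := hT'.exists_top _ hc
  obtain ⟨x, rfl⟩ := Quotient.mk_surjective ξ
  obtain ⟨p, rfl⟩ := Quotient.mk_surjective υ
  obtain ⟨q, rfl⟩ := Quotient.mk_surjective ζ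
  refine ⟨x, fun h => hξ (h ▸ rfl), fun z hz => ?_, p, q, ?_⟩
  · by_cases hz' : (⟦z⟧ : Quotient s.setoid) = ⟦a⟧
    · rw [hT'.liftRel_of_mk_eq hz hz']
      exact eq_le_liftRel fun h => hξ (h ▸ rfl)
    · rw [hT'.liftRel_le_iff hz' hξ]
      exact hcoarse _ hz'
  · rw [hT'.liftRel_of_mk_ne hξ]
    exact ⟨hυζ, fun t => hcover ⟦t⟧⟩

theorem isDyadicHierarchy_liftRel [Finite X] : IsDyadicHierarchy a (liftRel s a T') where
  not_rel_base _ _ h := h.1 rfl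
  equivalence x hx := by
    by_cases h : (⟦x⟧ : Quotient s.setoid) = ⟦a⟧
    · rw [hT'.liftRel_of_mk_eq hx h]
      exact eq_equivalence
    · rw [hT'.liftRel_of_mk_ne h]
      exact (hT'.equivalence _ h).comap _
  total x hx y hy := by
    by_cases hxa : (⟦x⟧ : Quotient s.setoid) = ⟦a⟧
    · exact .inl (hT'.liftRel_of_mk_eq hx hxa ▸ eq_le_liftRel hy)
    by_cases hya : (⟦y⟧ : Quotient s.setoid) = ⟦a⟧
    · exact .inr (hT'.liftRel_of_mk_eq hy hya ▸ eq_le_liftRel hx)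
    rw [hT'.liftRel_le_iff hxa hya, hT'.liftRel_le_iff hya hxa]
    exact hT'.total _ hxa _ hya
  separating u v huv := by
    by_cases h : (⟦u⟧ : Quotient s.setoid) = ⟦v⟧
    · refine ⟨s a, s.ne_self a, ?_⟩
      rwa [hT'.liftRel_of_mk_eq (s.ne_self a) (s.mk_apply a)]
    obtain ⟨ξ, hξ, hξuv⟩ := hT'.separating _ _ h
    obtain ⟨x, rfl⟩ := Quotient.mk_surjective ξ
    exact ⟨x, fun h => hξ (h ▸ rfl), by rwa [hT'.liftRel_of_mk_ne hξ]⟩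
  exists_top := hT'.liftRel_exists_top
  split x hx x' hx' hcov u := by
    have hxa : (⟦x⟧ : Quotient s.setoid) ≠ ⟦a⟧ := fun h =>
      hcov.1.not_ge (hT'.liftRel_of_mk_eq hx h ▸ eq_le_liftRel hx')
    by_cases hx'a : (⟦x'⟧ : Quotient s.setoid) = ⟦a⟧
    · exact hT'.liftRel_split_of_mk_eq hxa hx' hx'a hcov u
    obtain ⟨υ, ζ, h⟩ :=
      hT'.split _ hxa _ hx'a (hT'.isCoveringLevel_of_liftRel hxa hx'a hcov) ⟦u⟧
    obtain ⟨v, rfl⟩ := Quotient.mk_surjective υ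
    obtain ⟨w, rfl⟩ := Quotient.mk_surjective ζ
    rw [hT'.liftRel_of_mk_ne hxa, hT'.liftRel_of_mk_ne hx'a]
    exact ⟨v, w, h.1, h.2.1, h.2.2.1, fun t => h.2.2.2 ⟦t⟧⟩
  rel_base_iff x hx y hy := by
    by_cases hya : (⟦y⟧ : Quotient s.setoid) = ⟦a⟧
    · rw [hT'.liftRel_of_mk_eq hy hya]
      exact iff_of_false hx.symm fun hlt => hlt.not_ge (eq_le_liftRel hx)
    by_cases hxa : (⟦x⟧ : Quotient s.setoid) = ⟦a⟧
    · rw [hT'.liftRel_of_mk_eq hx hxa]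
      refine iff_of_true ?_ (hT'.eq_lt_liftRel hya)
      rw [hT'.liftRel_of_mk_ne hya, onFun, hxa]
      exact hT'.refl hya _
    rw [hT'.liftRel_lt_iff hxa hya, hT'.liftRel_of_mk_ne hya]
    exact hT'.rel_base_iff _ hxa _ hya

lemma isPairingOf_liftRel [Finite X] : IsPairingOf s (liftRel s a T') := by
  intro u v
  rw [← Pairing.mk_eq_mk]
  refine ⟨fun h => ?_, fun h x hx => ?_⟩
  · by_cases hall : ∀ z, (⟦z⟧ : Quotient s.setoid) = ⟦a⟧
    · exact (hall u).trans (hall v).symm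
    push Not at hall
    obtain ⟨c, hc⟩ := hall
    obtain ⟨η, hη, hηd⟩ := hT'.exists_discrete ⟨_, hc⟩
    obtain ⟨y, rfl⟩ := Quotient.mk_surjective η
    have huv := h y (hT'.isNondiscrete_liftRel_iff.2 hη)
    rwa [hT'.liftRel_of_mk_ne hη, onFun, hT'.rel_iff_eq hη hηd] at huv
  · have hx' := hT'.isNondiscrete_liftRel_iff.1 hx
    rw [hT'.liftRel_of_mk_ne hx', onFun, h]
    exact hT'.refl hx' _

lemma quotRel_liftRel : quotRel s a (liftRel s a T') = T' := by
  ext ξ υ ζ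
  by_cases hξ : ξ = ⟦a⟧
  · subst hξ
    exact iff_of_false (fun h => h.1 rfl) (hT'.not_rel_base υ ζ)
  obtain ⟨x, rfl⟩ := Quotient.mk_surjective ξ
  obtain ⟨u, rfl⟩ := Quotient.mk_surjective υ
  obtain ⟨v, rfl⟩ := Quotient.mk_surjective ζ
  refine ⟨fun ⟨_, x₁, u₁, v₁, hx₁, hu₁, hv₁, h⟩ => ?_,
    fun h => ⟨hξ, x, u, v, rfl, rfl, rfl, by rwa [hT'.liftRel_of_mk_ne hξ]⟩⟩
  rwa [hT'.liftRel_of_mk_ne (hx₁ ▸ hξ), onFun, hx₁, hu₁, hv₁] at h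

end IsDyadicHierarchy

lemma IsDyadicHierarchy.liftRel_quotRel {T : X → X → X → Prop} (hT : IsDyadicHierarchy a T)
    (hs : IsPairingOf s T) : liftRel s a (quotRel s a T) = T := by
  have hT' := hT.isDyadicHierarchy_quotRel hs
  funext x
  by_cases hxa : x = a
  · subst hxa
    ext u v
    exact iff_of_false (fun h => h.1 rfl) (hT.not_rel_base u v)
  by_cases hx : IsNondiscrete T x
  · rw [hT'.liftRel_of_mk_ne ((hT.mk_ne_mk_base_iff hs).2 hx), hT.quotRel_onFun hs hx]
  · rw [hT'.liftRel_of_mk_eq hxa (not_not.1 (mt (hT.mk_ne_mk_base_iff hs).1 hx))]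
    ext u v
    exact (hT.rel_iff_eq hxa hx).symm

end Lift

theorem IsDyadicHierarchy.exists_card_eq_two_pow {X : Type} [Finite X] {a : X}
    {T : X → X → X → Prop} (hT : IsDyadicHierarchy a T) : ∃ m, Nat.card X = 2 ^ m := by
  induction hX : Nat.card X using Nat.strong_induction_on generalizing X with
  | _ n ih =>
    have : Nonempty X := ⟨a⟩
    have hpos : 0 < n := hX ▸ Nat.card_pos
    by_cases hn : n = 1
    · exact ⟨0, hn⟩
    have : Nontrivial X := Finite.one_lt_card_iff_nontrivial.1 (by omega)
    obtain ⟨s, hs⟩ := hT.exists_isPairingOf (exists_ne a)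
    have : Nonempty (Quotient s.setoid) := ⟨⟦a⟧⟩
    have : 0 < Nat.card (Quotient s.setoid) := Nat.card_pos
    have hcard := s.card_eq_two_mul
    obtain ⟨m, hm⟩ := ih _ (by omega) (hT.isDyadicHierarchy_quotRel hs) rfl
    exact ⟨m + 1, by rw [pow_succ, ← hm, ← hX, hcard, mul_comm]⟩

abbrev DyadicHierarchy (X : Type) (a : X) : Type :=
  {T : X → X → X → Prop // IsDyadicHierarchy a T}

namespace DyadicHierarchy

section Counting

variable {X : Type} {a : X}

noncomputable def pairing [Finite X] (h : ∃ b, b ≠ a) (T : DyadicHierarchy X a) : Pairing X :=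
  (T.2.exists_isPairingOf h).choose

lemma pairing_eq_iff [Finite X] (h : ∃ b, b ≠ a) (T : DyadicHierarchy X a) {s : Pairing X} :
    pairing h T = s ↔ IsPairingOf s T.1 :=
  ⟨fun e => e ▸ (T.2.exists_isPairingOf h).choose_spec,
    (T.2.exists_isPairingOf h).choose_spec.unique⟩

noncomputable def quotientEquiv [Finite X] (s : Pairing X) :
    {T : DyadicHierarchy X a // IsPairingOf s T.1} ≃ DyadicHierarchy (Quotient s.setoid) ⟦a⟧ where
  toFun T := ⟨quotRel s a T.1.1, T.1.2.isDyadicHierarchy_quotRel T.2⟩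
  invFun T' := ⟨⟨liftRel s a T'.1, T'.2.isDyadicHierarchy_liftRel⟩, T'.2.isPairingOf_liftRel⟩
  left_inv T := Subtype.ext (Subtype.ext (T.1.2.liftRel_quotRel T.2))
  right_inv T' := Subtype.ext T'.2.quotRel_liftRel

noncomputable def equivSigmaQuotient [Finite X] (h : ∃ b, b ≠ a) :
    DyadicHierarchy X a ≃ Σ s : Pairing X, DyadicHierarchy (Quotient s.setoid) ⟦a⟧ :=
  (Equiv.sigmaFiberEquiv (pairing h)).symm.trans <| Equiv.sigmaCongrRight fun s =>
    (Equiv.subtypeEquivRight fun T => pairing_eq_iff h T).trans (quotientEquiv s)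

lemma isDyadicHierarchy_bot [Subsingleton X] : IsDyadicHierarchy a fun _ _ _ => False where
  not_rel_base _ _ := id
  equivalence x hx := absurd (Subsingleton.elim x a) hx
  total x hx := absurd (Subsingleton.elim x a) hx
  separating u v huv := absurd (Subsingleton.elim u v) huv
  exists_top x hx := absurd (Subsingleton.elim x a) hx
  split x hx := absurd (Subsingleton.elim x a) hx
  rel_base_iff x hx := absurd (Subsingleton.elim x a) hx

theorem odd_card [Finite X] (a : X) {m : ℕ} (h : Nat.card X = 2 ^ m) :
    Odd (Nat.card (DyadicHierarchy X a)) := by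
  induction m generalizing X with
  | zero =>
    have : Subsingleton X := (Nat.card_eq_one_iff_unique.1 h).1
    have : Unique (DyadicHierarchy X a) := ⟨⟨⟨_, isDyadicHierarchy_bot⟩⟩, fun T => by
      ext x u v
      obtain rfl := Subsingleton.elim x a
      exact iff_false_intro (T.2.not_rel_base u v)⟩
    rw [Nat.card_unique]
    exact odd_one
  | succ m ih =>
    have : Nontrivial X := Finite.one_lt_card_iff_nontrivial.1
      (by rw [h, pow_succ]; have := Nat.one_le_two_pow (n := m); omega)
    rw [Nat.card_congr (equivSigmaQuotient (exists_ne a))]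
    refine Nat.odd_card_sigma (Pairing.odd_card ⟨2 ^ m, by rw [h, pow_succ]; ring⟩) fun s => ih _ ?_
    have := s.card_eq_two_mul
    rw [h, pow_succ] at this
    omega

end Counting

open BoundedFormula

def relSymb : (cLang 1 rels3).Relations 3 := (0 : Fin 1)

def base : (cLang 1 rels3).Constants := (0 : Fin 1)

section Formulas

variable {n : ℕ}

def rel (t₁ t₂ t₃ : (cLang 1 rels3).Term (Empty ⊕ Fin n)) :
    (cLang 1 rels3).BoundedFormula Empty n :=
  relSymb.boundedFormula ![t₁, t₂, t₃]

def neBase (i : Fin n) : (cLang 1 rels3).BoundedFormula Empty n := ∼(&i =' base.term)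

def levelLE (i j : Fin n) : (cLang 1 rels3).BoundedFormula Empty n :=
  ∀' ∀' (rel &i.castSucc.castSucc &(Fin.last n).castSucc &(Fin.last (n + 1)) ⟹
    rel &j.castSucc.castSucc &(Fin.last n).castSucc &(Fin.last (n + 1)))

def levelLT (i j : Fin n) : (cLang 1 rels3).BoundedFormula Empty n :=
  levelLE i j ⊓ ∼(levelLE j i)

def covers (i' i : Fin n) : (cLang 1 rels3).BoundedFormula Empty n :=
  levelLT i' i ⊓ ∀' (neBase (Fin.last n) ⟹ levelLT i'.castSucc (Fin.last n) ⟹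
    ∼(levelLT (Fin.last n) i.castSucc))

def twoClasses (i : Fin n) : (cLang 1 rels3).BoundedFormula Empty n :=
  ∃' ∃' (∼(rel &i.castSucc.castSucc &(Fin.last n).castSucc &(Fin.last (n + 1))) ⊓
    ∀' (rel &i.castSucc.castSucc.castSucc &(Fin.last (n + 2)) &(Fin.last n).castSucc.castSucc ⊔
      rel &i.castSucc.castSucc.castSucc &(Fin.last (n + 2)) &(Fin.last (n + 1)).castSucc))

end Formulas

/-- The conjuncts are the fields of `IsDyadicHierarchy`, in order, with `equivalence` split into
three. Bound variables are numbered from the outermost quantifier: `&0` is bound by the first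
`∀'` or `∃'`. -/
noncomputable def sentence : (cLang 1 rels3).Sentence :=
  (∀' ∀' ∼(rel base.term &0 &1)) ⊓
  ((∀' (neBase 0 ⟹ ∀' rel &0 &1 &1)) ⊓
  ((∀' (neBase 0 ⟹ ∀' ∀' (rel &0 &1 &2 ⟹ rel &0 &2 &1))) ⊓
  ((∀' (neBase 0 ⟹ ∀' ∀' ∀' (rel &0 &1 &2 ⟹ rel &0 &2 &3 ⟹ rel &0 &1 &3))) ⊓
  ((∀' (neBase 0 ⟹ ∀' (neBase 1 ⟹ levelLE 0 1 ⊔ levelLE 1 0))) ⊓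
  ((∀' ∀' (∼(&0 =' &1) ⟹ ∃' (neBase 2 ⊓ ∼(rel &2 &0 &1)))) ⊓
  ((∀' (neBase 0 ⟹ ∃' (neBase 1 ⊓ (∀' (neBase 2 ⟹ levelLE 2 1) ⊓ twoClasses 1)))) ⊓
  ((∀' (neBase 0 ⟹ ∀' (neBase 1 ⟹ covers 1 0 ⟹ ∀' ∃' ∃' (rel &0 &2 &3 ⊓ (rel &0 &2 &4 ⊓
    (∼(rel &1 &3 &4) ⊓ ∀' (rel &0 &2 &5 ⟹ rel &1 &5 &3 ⊔ rel &1 &5 &4))))))) ⊓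
  (∀' (neBase 0 ⟹ ∀' (neBase 1 ⟹ (rel &1 base.term &0 ⇔ levelLT 0 1)))))))))))

section Realize

variable {M : Type} [(cLang 1 rels3).Structure M]

def interp (M : Type) [(cLang 1 rels3).Structure M] (x u v : M) : Prop :=
  Structure.RelMap relSymb ![x, u, v]

variable {n : ℕ} {xs : Fin n → M} (v : Empty → M)

@[simp] lemma realize_rel (t₁ t₂ t₃ : (cLang 1 rels3).Term (Empty ⊕ Fin n)) :
    (rel t₁ t₂ t₃).Realize v xs ↔ interp M (t₁.realize (Sum.elim v xs))
      (t₂.realize (Sum.elim v xs)) (t₃.realize (Sum.elim v xs)) := by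
  rw [rel, BoundedFormula.realize_rel, interp]
  refine iff_of_eq (congrArg _ ?_)
  funext i
  fin_cases i <;> rfl

@[simp] lemma realize_neBase (i : Fin n) : (neBase i).Realize v xs ↔ xs i ≠ base := by
  simp [neBase]

@[simp] lemma realize_levelLE (i j : Fin n) :
    (levelLE i j).Realize v xs ↔ interp M (xs i) ≤ interp M (xs j) := by
  simp [levelLE, Pi.le_def]

@[simp] lemma realize_levelLT (i j : Fin n) :
    (levelLT i j).Realize v xs ↔ interp M (xs i) < interp M (xs j) := by
  simp [levelLT, lt_iff_le_not_ge]

@[simp] lemma realize_covers (i' i : Fin n) :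
    (covers i' i).Realize v xs ↔ IsCoveringLevel (base : M) (interp M) (xs i') (xs i) := by
  simp [covers, IsCoveringLevel]

@[simp] lemma realize_twoClasses (i : Fin n) :
    (twoClasses i).Realize v xs ↔ HasTwoClasses (interp M (xs i)) := by
  simp [twoClasses, HasTwoClasses]

theorem realize_sentence : M ⊨ sentence ↔ IsDyadicHierarchy (base : M) (interp M) := by
  simp only [Sentence.Realize, Formula.Realize, sentence, Nat.reduceAdd, Fin.isValue, comp_apply,
    realize_inf, realize_all, Nat.succ_eq_add_one, realize_not, realize_rel, Term.realize_constants,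
    Term.realize_var, Sum.elim_inr, Fin.snoc, Fin.coe_ofNat_eq_mod, Nat.zero_mod, Order.lt_one_iff,
    ↓reduceDIte, Fin.reduceLast, zero_ne_one, not_false_eq_true, Fin.castLT_eq_castPred,
    Fin.castPred_zero, Fin.castSucc_zero, lt_self_iff_false, cast_eq, Nat.mod_succ,
    realize_imp, realize_neBase, ne_eq, Order.lt_two_iff, zero_le, Fin.reduceEq, Nat.one_mod,
    Std.le_refl, Fin.castPred_one, Nat.ofNat_pos, Nat.one_lt_ofNat, Nat.reduceMod, Nat.lt_add_one,
    Fin.coe_castPred, realize_sup, realize_levelLE, realize_bdEqual, realize_ex, realize_twoClasses,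
    realize_covers, Nat.reduceLT, Fin.val_castLT, realize_iff, realize_levelLT]
  exact ⟨fun ⟨h₁, h₂, h₃, h₄, h₅, h₆, h₇, h₈, h₉⟩ =>
      ⟨h₁, fun x hx => ⟨h₂ x hx, h₃ x hx _ _, h₄ x hx _ _ _⟩, h₅, h₆, h₇, h₈, h₉⟩,
    fun hT => ⟨hT.1, fun x hx => hT.refl hx, fun x hx _ _ => hT.symm hx,
      fun x hx _ _ _ => hT.trans hx, hT.3, hT.4, hT.5, hT.6, hT.7⟩⟩

end Realize

lemma realize_sentence_mkStructure {M : Type} (c : Fin 1 → M)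
    (S : ∀ k, rels3 k → (Fin k → M) → Prop) :
    (letI := cLang.mkStructure c S; M ⊨ sentence) ↔
      IsDyadicHierarchy (c 0) fun x u v => S 3 (0 : Fin 1) ![x, u, v] :=
  letI := cLang.mkStructure c S
  realize_sentence

lemma isEmpty_rels3 {k : ℕ} (hk : k ≠ 3) : IsEmpty (rels3 k) := by
  rcases k with _ | _ | _ | _ | k
  all_goals first | exact absurd rfl hk | exact inferInstanceAs (IsEmpty Empty)

def rels3Equiv (M : Type) : (∀ k, rels3 k → (Fin k → M) → Prop) ≃ (M → M → M → Prop) where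
  toFun S x u v := S 3 (0 : Fin 1) ![x, u, v]
  invFun T k _ w :=
    ∃ h : k = 3, T (w (Fin.cast h.symm 0)) (w (Fin.cast h.symm 1)) (w (Fin.cast h.symm 2))
  left_inv S := by
    funext k r w
    by_cases hk : k = 3
    · subst hk
      obtain rfl : r = (0 : Fin 1) := Subsingleton.elim (α := Fin 1) _ _
      have hw : ![w 0, w 1, w 2] = w := by
        funext i
        fin_cases i <;> rfl
      simp [hw]
    · exact (isEmpty_rels3 hk).elim r
  right_inv T := by
    funext x u v
    simp

lemma val_add_one_eq_iff {k : ℕ} (c : Fin 1 → Fin (k + 1)) :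
    (c 0 : ℕ) + 1 = k + 1 ↔ c = fun _ => Fin.last k := by
  refine ⟨fun h => funext fun i => ?_, fun h => by simp [h]⟩
  rw [Subsingleton.elim i 0]
  exact Fin.ext (by simp only [Fin.val_last]; omega)

lemma gCount_sentence_succ (k : ℕ) :
    gCount sentence (k + 1) = Nat.card (DyadicHierarchy (Fin (k + 1)) (Fin.last k)) := by
  refine Nat.card_congr
    { toFun := fun p => ⟨rels3Equiv _ p.1.1, ?_⟩
      invFun := fun T => ⟨((rels3Equiv _).symm T.1, fun _ => Fin.last k), by simp, ?_⟩
      left_inv := fun p => Subtype.ext (Prod.ext ((rels3Equiv _).symm_apply_apply _)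
        ((val_add_one_eq_iff _).1 p.2.1).symm)
      right_inv := fun T => Subtype.ext ((rels3Equiv _).apply_symm_apply _) }
  · have h := (realize_sentence_mkStructure _ _).1 p.2.2
    rwa [(val_add_one_eq_iff _).1 p.2.1] at h
  · refine (realize_sentence_mkStructure _ _).2 ?_
    have h := T.2
    rwa [← (rels3Equiv _).apply_symm_apply T.1] at h

lemma gCount_sentence_eq_zero (n : ℕ) (hn : ¬ ∃ m, n = 2 ^ m) : gCount sentence n = 0 := by
  rcases n with _ | k
  · rw [gCount, Nat.card_eq_zero]
    exact .inl ⟨fun p => (p.1.2 0).elim0⟩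
  rw [gCount_sentence_succ, Nat.card_eq_zero]
  refine .inl ⟨fun T => hn ?_⟩
  simpa using T.2.exists_card_eq_two_pow

lemma gCount_sentence_two_pow (m : ℕ) : gCount sentence (2 ^ m) ≡ 1 [MOD 2] := by
  obtain ⟨k, hk⟩ := Nat.exists_eq_add_one.2 (Nat.two_pow_pos m)
  rw [hk, gCount_sentence_succ]
  exact Nat.odd_iff.1 (odd_card _ (by simpa using hk.symm))

end DyadicHierarchy

theorem not_eventually_periodic_mod_two {g : ℕ → ℕ} (h₀ : ∀ n, (¬ ∃ m, n = 2 ^ m) → g n = 0)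
    (h₁ : ∀ m, g (2 ^ m) ≡ 1 [MOD 2]) :
    ¬ ∃ r p : ℕ, 1 ≤ p ∧ ∀ n, r ≤ n → g (n + p) ≡ g n [MOD 2] := by
  rintro ⟨r, p, hp, hper⟩
  have hr := (r + p).lt_two_pow_self
  have hgap := h₀ (2 ^ (r + p) + p)
    (Nat.not_exists_eq_two_pow_of_lt_of_lt (m := r + p) (by omega) (by rw [pow_succ]; omega))
  have h := (hper _ (by omega)).trans (h₁ (r + p))
  rw [hgap] at h
  exact absurd h (by decide)

/-- **Ternary relation counterexample with a hard-wired constant.**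
There is a first-order sentence φ over the vocabulary with one constant symbol and one
ternary relation symbol such that g(n) = 0 whenever n is not a power of 2, and
g(n) ≡ 1 (mod 2) whenever n = 2^m.  In particular n ↦ g(n) mod 2 is not ultimately
periodic, so g is not MC-finite. -/
theorem ternary_counterexample_with_constant :
    ∃ φ : (cLang 1 rels3).Sentence,
      (∀ n : ℕ, (¬ ∃ m : ℕ, n = 2 ^ m) → gCount φ n = 0) ∧
      (∀ m : ℕ, gCount φ (2 ^ m) ≡ 1 [MOD 2]) ∧
      (¬ ∃ r p : ℕ, 1 ≤ p ∧ ∀ n : ℕ, r ≤ n → gCount φ (n + p) ≡ gCount φ n [MOD 2]) ∧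
      ¬ MCFinite (gCount φ) := by
  have hper := not_eventually_periodic_mod_two DyadicHierarchy.gCount_sentence_eq_zero
    DyadicHierarchy.gCount_sentence_two_pow
  exact ⟨DyadicHierarchy.sentence, DyadicHierarchy.gCount_sentence_eq_zero,
    DyadicHierarchy.gCount_sentence_two_pow, hper, fun h => hper (h 2 le_rfl)⟩
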